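/- arXiv:2506.03749 — 3 statements merged into one kernel-verified Lean document; each statement's English description precedes it below -/
import Mathlib

section
/- Let (X,Γ,l) be a weak length space such that the reverse path γ⁻¹ of every γ ∈ Γ also lies in Γ, let δ(l) be the induced weak metric, and for t ∈ [0,1] define l_t(γ) = (1−t)·l(γ) + t·l(γ⁻¹). If x, y ∈ X are points such that there exists a bi-minimal path γ ∈ Γ from x to y, then for every t ∈ [0,1], δ(l_t)(x,y) = (1−t)·δ(l)(x,y) + t·δ(l)(y,x). -/
open Set
open scoped ENNReal

noncomputable section

/-- A path defined on a compact interval `[a, b]` of `ℝ` with values in `X`. -/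
structure PathOn (X : Type*) where
  a : ℝ
  b : ℝ
  le : a ≤ b
  toFun : ℝ → X

namespace PathOn

variable {X : Type*}

/-- The initial point of a path. -/
def source (γ : PathOn X) : X := γ.toFun γ.a

/-- The final point of a path. -/
def target (γ : PathOn X) : X := γ.toFun γ.b

/-- The reverse path `γ⁻¹` of a path `γ`. -/
def reverse (γ : PathOn X) : PathOn X :=
  ⟨γ.a, γ.b, γ.le, fun s => γ.toFun (γ.a + γ.b - s)⟩

/-- The concatenation of two paths (meaningful when `γ₁.target = γ₂.source`). -/
def concat (γ₁ γ₂ : PathOn X) : PathOn X :=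
  ⟨γ₁.a, γ₁.b + (γ₂.b - γ₂.a), by have := γ₁.le; have := γ₂.le; linarith,
    fun s => if s ≤ γ₁.b then γ₁.toFun s else γ₂.toFun (s - γ₁.b + γ₂.a)⟩

/-- The reparametrisation of a path by a function `f : [c,d] → [a,b]`. -/
def reparam (γ : PathOn X) (c d : ℝ) (h : c ≤ d) (f : ℝ → ℝ) : PathOn X :=
  ⟨c, d, h, γ.toFun ∘ f⟩

/-- The constant path at `x` defined on `[a,b]`. -/
def const (x : X) (a b : ℝ) (h : a ≤ b) : PathOn X := ⟨a, b, h, fun _ => x⟩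

end PathOn

/-- A semigroupoid of continuous paths on a topological space `X`:
a collection of continuous paths closed under concatenation and containing
all constant paths. -/
structure PathSystem (X : Type*) [TopologicalSpace X] where
  Γ : Set (PathOn X)
  cont : ∀ γ ∈ Γ, ContinuousOn γ.toFun (Icc γ.a γ.b)
  concat_mem : ∀ γ₁ ∈ Γ, ∀ γ₂ ∈ Γ, γ₁.target = γ₂.source → γ₁.concat γ₂ ∈ Γ
  const_mem : ∀ (x : X) (a b : ℝ) (h : a ≤ b), PathOn.const x a b h ∈ Γ

/-- `L` is a weak length structure on the semigroupoid of paths `P`. -/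
structure IsWeakLength {X : Type*} [TopologicalSpace X] (P : PathSystem X)
    (L : PathOn X → ℝ≥0∞) : Prop where
  concat_add : ∀ γ₁ ∈ P.Γ, ∀ γ₂ ∈ P.Γ, γ₁.target = γ₂.source →
    L (γ₁.concat γ₂) = L γ₁ + L γ₂
  const_zero : ∀ (x : X) (a b : ℝ) (h : a ≤ b), L (PathOn.const x a b h) = 0
  reparam_eq : ∀ γ ∈ P.Γ, ∀ (c d : ℝ) (h : c ≤ d) (f : ℝ → ℝ),
    ContinuousOn f (Icc c d) → MonotoneOn f (Icc c d) → f '' Icc c d = Icc γ.a γ.b →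
    γ.reparam c d h f ∈ P.Γ → L (γ.reparam c d h f) = L γ

/-- The weak metric `δ(L)` induced by a (weak length) function `L` on the paths of `P`:
the infimum of `L` over all paths of `P` joining `x` to `y` (equal to `∞` when no
such path exists). -/
noncomputable def inducedWeakMetric {X : Type*} [TopologicalSpace X] (P : PathSystem X)
    (L : PathOn X → ℝ≥0∞) (x y : X) : ℝ≥0∞ :=
  ⨅ (γ : PathOn X) (_ : γ ∈ P.Γ ∧ γ.source = x ∧ γ.target = y), L γ

/-- Let `(X, Γ, L)` be a weak length space such that the reverse of every
path of `Γ` lies in `Γ`, and for `t ∈ [0,1]` let `L_t(γ) = (1-t)·L(γ) + t·L(γ⁻¹)`. If there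
exists a bi-minimal path `γ ∈ Γ` from `x` to `y` (i.e. `L γ = δ(L)(x,y) ≠ ∞` and its reverse
is minimal from `y` to `x`, `L γ⁻¹ = δ(L)(y,x) ≠ ∞`), then for every `t ∈ [0,1]`,
`δ(L_t)(x,y) = (1-t)·δ(L)(x,y) + t·δ(L)(y,x)`. -/
theorem weak_length_arith_eq_of_biminimal {X : Type*} [TopologicalSpace X]
    (P : PathSystem X) (L : PathOn X → ℝ≥0∞) (hL : IsWeakLength P L)
    (hrev : ∀ γ ∈ P.Γ, γ.reverse ∈ P.Γ)
    (x y : X)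
    (hbi : ∃ γ ∈ P.Γ, γ.source = x ∧ γ.target = y ∧
      L γ = inducedWeakMetric P L x y ∧ L γ ≠ ⊤ ∧
      L γ.reverse = inducedWeakMetric P L y x ∧ L γ.reverse ≠ ⊤)
    (t : ℝ) (ht : t ∈ Set.Icc (0 : ℝ) 1) :
    inducedWeakMetric P
        (fun γ => ENNReal.ofReal (1 - t) * L γ + ENNReal.ofReal t * L γ.reverse) x y
      = ENNReal.ofReal (1 - t) * inducedWeakMetric P L x y
        + ENNReal.ofReal t * inducedWeakMetric P L y x := by
  obtain ⟨γ, hγ, hs, htgt, hmin, hfin, hrmin, hrfin⟩ := hbi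
  have hrevst : ∀ γ' : PathOn X, γ'.reverse.source = γ'.target ∧ γ'.reverse.target = γ'.source := by
    intro γ'
    constructor <;> simp [PathOn.reverse, PathOn.source, PathOn.target] <;> ring_nf
  apply le_antisymm
  · rw [← hmin, ← hrmin]
    exact iInf₂_le γ ⟨hγ, hs, htgt⟩
  · refine le_iInf₂ fun γ' h => ?_
    obtain ⟨hγ', hs', ht'⟩ := h
    have h1 : inducedWeakMetric P L x y ≤ L γ' := iInf₂_le γ' ⟨hγ', hs', ht'⟩
    have h2 : inducedWeakMetric P L y x ≤ L γ'.reverse :=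
      iInf₂_le γ'.reverse ⟨hrev _ hγ', (hrevst γ').1.trans ht', (hrevst γ').2.trans hs'⟩
    exact add_le_add (mul_le_mul_right h1 _) (mul_le_mul_right h2 _)
end
end

section
/- Let Ω ⊆ ℝⁿ be a closed convex set with nonempty interior and let 𝔉 be the Funk metric on the interior of Ω. Then for every t ∈ [0,1], Euclidean straight line segments contained in the interior of Ω are geodesics for the arithmetic weighted Funk metric 𝔉_t^a(x,y) = (1−t)·𝔉(x,y) + t·𝔉(y,x); that is, the length of any straight segment with respect to 𝔉_t^a (the supremum over finite partitions of the sums of 𝔉_t^a-distances of consecutive points) equals the 𝔉_t^a-distance between its endpoints. -/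
open Set
open scoped ENNReal

noncomputable section

open scoped Classical

/-- The length of a path `α` on `[a,b]` with respect to a weak metric `η`:
the supremum, over all finite partitions `a = t₀ ≤ t₁ ≤ … ≤ t_{k+1} = b`, of
`Σ η (α tᵢ) (α tᵢ₊₁)`. -/
noncomputable def weakMetricLength {X : Type*} (η : X → X → ℝ≥0∞) (α : ℝ → X)
    (a b : ℝ) : ℝ≥0∞ :=
  ⨆ (k : ℕ) (T : Fin (k + 2) → ℝ)
    (_ : Monotone T ∧ T 0 = a ∧ T (Fin.last (k + 1)) = b),
    ∑ i : Fin (k + 1), η (α (T i.castSucc)) (α (T i.succ))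

variable {n : ℕ}

/-- The Funk weak metric of a convex body `Ω ⊆ ℝⁿ`. For `x ≠ y` in the interior of `Ω`,
if the ray `R(x,y)` from `x` through `y` leaves `Ω` (equivalently, the set of parameters
`s ≥ 0` with `x + s(y−x) ∈ Ω` is bounded), it hits the boundary at the point
`a⁺ = x + s⁺·(y−x)` with `s⁺ = sup {s ≥ 0 | x + s(y−x) ∈ Ω}`, and
`𝔉(x,y) = log (|x−a⁺| / |y−a⁺|)`; otherwise `𝔉(x,y) = 0`. -/
noncomputable def funkD (Ω : Set (EuclideanSpace ℝ (Fin n)))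
    (x y : EuclideanSpace ℝ (Fin n)) : ℝ :=
  if BddAbove {s : ℝ | 0 ≤ s ∧ x + s • (y - x) ∈ Ω} then
    Real.log
      (dist x (x + sSup {s : ℝ | 0 ≤ s ∧ x + s • (y - x) ∈ Ω} • (y - x)) /
       dist y (x + sSup {s : ℝ | 0 ≤ s ∧ x + s • (y - x) ∈ Ω} • (y - x)))
  else 0

/-- The arithmetic weighted Funk metric `𝔉_t^a(x,y) = (1−t)𝔉(x,y) + t𝔉(y,x)`. -/
noncomputable def funkWa (Ω : Set (EuclideanSpace ℝ (Fin n))) (t : ℝ)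
    (x y : EuclideanSpace ℝ (Fin n)) : ℝ :=
  (1 - t) * funkD Ω x y + t * funkD Ω y x

/-!
Fix the line `r ↦ c + r • e` and let `M` and `m` be the supremum and infimum of the parameters
`r` with `c + r • e ∈ Ω`. For `a ≤ b` strictly between `m` and `M`, the Funk distance from
parameter `a` to parameter `b` is `log (M - a) - log (M - b)` and the reverse one is
`log (b - m) - log (a - m)` (a term is `0` when the corresponding bound is infinite). So along
the line `𝔉_t^a` is a difference `φ a - φ b` of one potential `φ`, antitone on `(m, M)`; for
`t ∈ [0, 1]` every partition sum of the segment therefore telescopes to `𝔉_t^a(p, q)`.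
-/

lemma sum_castSucc_sub_succ {M : Type*} [AddCommGroup M] {m : ℕ} (f : Fin (m + 1) → M) :
    ∑ i : Fin m, (f i.castSucc - f i.succ) = f 0 - f (Fin.last m) := by
  induction m with
  | zero => simp
  | succ m ih =>
    have h := ih fun i => f i.castSucc
    rw [Fin.sum_univ_castSucc]
    simp only [Fin.succ_castSucc]
    rw [h, Fin.castSucc_zero, Fin.succ_last]
    abel

theorem weakMetricLength_eq_of_potential {X : Type*} (η : X → X → ℝ) (α : ℝ → X) {a b : ℝ}
    (hab : a ≤ b) (φ : ℝ → ℝ) (hφ : AntitoneOn φ (Icc a b))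
    (hη : ∀ x ∈ Icc a b, ∀ y ∈ Icc a b, x ≤ y → η (α x) (α y) = φ x - φ y) :
    weakMetricLength (fun x y => ENNReal.ofReal (η x y)) α a b
      = ENNReal.ofReal (η (α a) (α b)) := by
  have hsum : ∀ (k : ℕ) (T : Fin (k + 2) → ℝ), Monotone T → T 0 = a →
      T (Fin.last (k + 1)) = b →
      ∑ i : Fin (k + 1), ENNReal.ofReal (η (α (T i.castSucc)) (α (T i.succ)))
        = ENNReal.ofReal (η (α a) (α b)) := by
    intro k T hT h0 h1
    have hmem : ∀ i, T i ∈ Icc a b :=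
      fun i => ⟨h0 ▸ hT (Fin.zero_le i), h1 ▸ hT (Fin.le_last i)⟩
    have hstep : ∀ i : Fin (k + 1),
        η (α (T i.castSucc)) (α (T i.succ)) = φ (T i.castSucc) - φ (T i.succ) :=
      fun i => hη _ (hmem _) _ (hmem _) (hT i.castSucc_le_succ)
    simp only [hstep]
    rw [← ENNReal.ofReal_sum_of_nonneg fun i _ =>
        sub_nonneg.2 (hφ (hmem _) (hmem _) (hT i.castSucc_le_succ)),
      hη a ⟨le_rfl, hab⟩ b ⟨hab, le_rfl⟩ hab, ← h0, ← h1]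
    exact congrArg ENNReal.ofReal (sum_castSucc_sub_succ (φ ∘ T))
  apply le_antisymm
  · exact iSup₂_le fun k T => iSup_le fun hT => (hsum k T hT.1 hT.2.1 hT.2.2).le
  · have hmono : Monotone ![a, b] := by simpa [Fin.monotone_iff_le_succ] using hab
    exact le_iSup_of_le 0 <| le_iSup₂_of_le ![a, b] ⟨hmono, rfl, rfl⟩ (hsum 0 _ hmono rfl rfl).ge

-- No hypothesis `x ∈ Ω` is needed: off `Ω` the ratio is the junk value `0 / 0` and `log 0 = 0`.
lemma funkD_self (Ω : Set (EuclideanSpace ℝ (Fin n))) (x : EuclideanSpace ℝ (Fin n)) :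
    funkD Ω x x = 0 := by
  simp [funkD]

def lineParams {E : Type*} [AddCommGroup E] [Module ℝ E] (Ω : Set E) (c e : E) : Set ℝ :=
  {r | c + r • e ∈ Ω}

lemma exists_mem_lineParams_lt_gt {E : Type*} [AddCommGroup E] [Module ℝ E] [TopologicalSpace E]
    [ContinuousAdd E] [ContinuousSMul ℝ E] {Ω : Set E} {c e : E} {b : ℝ}
    (hb : c + b • e ∈ interior Ω) :
    (∃ r ∈ lineParams Ω c e, r < b) ∧ (∃ r ∈ lineParams Ω c e, b < r) := by
  have hU : (fun r : ℝ => c + r • e) ⁻¹' interior Ω ∈ nhds b :=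
    (isOpen_interior.preimage (by fun_prop)).mem_nhds hb
  obtain ⟨l, u, ⟨hl, hu⟩, hsub⟩ := mem_nhds_iff_exists_Ioo_subset.1 hU
  have hmem : ∀ x ∈ Ioo l u, x ∈ lineParams Ω c e := fun x hx => interior_subset (s := Ω) (hsub hx)
  exact ⟨⟨(l + b) / 2, hmem _ ⟨by linarith, by linarith⟩, by linarith⟩,
    ⟨(b + u) / 2, hmem _ ⟨by linarith, by linarith⟩, by linarith⟩⟩

lemma isLUB_affine_preimage {K : Set ℝ} {M a d : ℝ} (hd : 0 < d) (hK : IsLUB K M) (haM : a < M) :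
    IsLUB {s | 0 ≤ s ∧ a + s * d ∈ K} ((M - a) / d) := by
  refine ⟨fun s ⟨_, hs⟩ => ?_, fun u hu => ?_⟩
  · rw [le_div_iff₀ hd]
    linarith [hK.1 hs]
  · have hmem : ∀ r ∈ K, a < r → (r - a) / d ∈ {s | 0 ≤ s ∧ a + s * d ∈ K} := fun r hr har =>
      ⟨div_nonneg (by linarith) hd.le, by rwa [div_mul_cancel₀ _ hd.ne', add_sub_cancel]⟩
    obtain ⟨r₀, hr₀, har₀, -⟩ := hK.exists_between haM
    have hu₀ : 0 ≤ u := (div_nonneg (by linarith) hd.le).trans (hu (hmem r₀ hr₀ har₀))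
    rw [div_le_iff₀ hd, sub_le_iff_le_add']
    refine hK.2 fun r hr => ?_
    rcases le_or_gt r a with hra | har
    · linarith [mul_nonneg hu₀ hd.le]
    · have := hu (hmem r hr har)
      rw [div_le_iff₀ hd] at this
      linarith

lemma bddAbove_of_bddAbove_affine_preimage {K : Set ℝ} {a d : ℝ} (hd : 0 < d)
    (hS : BddAbove {s | 0 ≤ s ∧ a + s * d ∈ K}) : BddAbove K := by
  obtain ⟨u, hu⟩ := hS
  refine ⟨a + max u 0 * d, fun r hr => ?_⟩
  rcases le_or_gt r a with hra | har
  · linarith [mul_nonneg (le_max_right u 0) hd.le]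
  · have := @hu ((r - a) / d)
      ⟨div_nonneg (by linarith) hd.le, by rwa [div_mul_cancel₀ _ hd.ne', add_sub_cancel]⟩
    rw [div_le_iff₀ hd] at this
    linarith [mul_le_mul_of_nonneg_right (le_max_left u 0) hd.le]

def supPotential (K : Set ℝ) (r : ℝ) : ℝ :=
  if BddAbove K then Real.log (sSup K - r) else 0

-- This is `-log (r - sInf K)` when `K` is bounded below.
def infPotential (K : Set ℝ) (r : ℝ) : ℝ :=
  -supPotential (-K) (-r)

lemma supPotential_antitoneOn (K : Set ℝ) :
    AntitoneOn (supPotential K) {r | ∃ s ∈ K, r < s} := by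
  intro x _ y ⟨s, hs, hys⟩ hxy
  unfold supPotential
  split_ifs with hK
  · have := le_csSup hK hs
    exact Real.log_le_log (by linarith) (by linarith)
  · exact le_rfl

lemma infPotential_antitoneOn (K : Set ℝ) :
    AntitoneOn (infPotential K) {r | ∃ s ∈ K, s < r} := by
  intro x ⟨s, hs, hsx⟩ y ⟨s', hs', hsy⟩ hxy
  exact neg_le_neg <| supPotential_antitoneOn (-K) ⟨-s', by simpa using hs', neg_lt_neg hsy⟩
    ⟨-s, by simpa using hs, neg_lt_neg hsx⟩ (neg_le_neg hxy)

lemma funkD_add_smul (Ω : Set (EuclideanSpace ℝ (Fin n))) (c e : EuclideanSpace ℝ (Fin n))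
    {a b : ℝ} (hab : a ≤ b) (hb : ∃ r ∈ lineParams Ω c e, b < r) :
    funkD Ω (c + a • e) (c + b • e)
      = supPotential (lineParams Ω c e) a - supPotential (lineParams Ω c e) b := by
  rcases hab.eq_or_lt with rfl | hab
  · rw [funkD_self, sub_self]
  set K := lineParams Ω c e
  obtain ⟨r, hrK, hbr⟩ := hb
  have hd : 0 < b - a := sub_pos.2 hab
  have hline : ∀ s : ℝ, c + a • e + s • (c + b • e - (c + a • e)) = c + (a + s * (b - a)) • e :=
    fun s => by module
  have hS : {s : ℝ | 0 ≤ s ∧ c + a • e + s • (c + b • e - (c + a • e)) ∈ Ω}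
      = {s | 0 ≤ s ∧ a + s * (b - a) ∈ K} := by
    simp only [hline]; rfl
  by_cases hK : BddAbove K
  swap
  · rw [funkD, hS, if_neg (mt (bddAbove_of_bddAbove_affine_preimage hd) hK)]
    simp only [supPotential, if_neg hK, sub_self]
  have hbM : b < sSup K := hbr.trans_le (le_csSup hK hrK)
  have he : e ≠ 0 := by
    rintro rfl
    have hKuniv : K = univ := eq_univ_of_forall fun s => by simpa [K, lineParams] using hrK
    exact not_bddAbove_univ (hKuniv ▸ hK)
  have hlub := isLUB_affine_preimage hd (isLUB_csSup ⟨r, hrK⟩ hK) (hab.trans hbM)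
  have hdist : ∀ x ≤ sSup K, dist (c + x • e) (c + sSup K • e) = (sSup K - x) * ‖e‖ := by
    intro x hx
    rw [dist_add_left, dist_eq_norm, ← sub_smul, norm_smul, Real.norm_eq_abs,
      abs_of_nonpos (by linarith), neg_sub]
  rw [funkD, hS, if_pos hlub.bddAbove, hlub.csSup_eq hlub.nonempty, hline,
    div_mul_cancel₀ _ hd.ne', add_sub_cancel, hdist a (by linarith), hdist b hbM.le,
    mul_div_mul_right _ _ (norm_ne_zero_iff.2 he), Real.log_div (by linarith) (by linarith),
    supPotential, supPotential, if_pos hK, if_pos hK]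

lemma funkD_add_smul_swap (Ω : Set (EuclideanSpace ℝ (Fin n))) (c e : EuclideanSpace ℝ (Fin n))
    {a b : ℝ} (hab : a ≤ b) (ha : ∃ r ∈ lineParams Ω c e, r < a) :
    funkD Ω (c + b • e) (c + a • e)
      = infPotential (lineParams Ω c e) a - infPotential (lineParams Ω c e) b := by
  have hneg : lineParams Ω c (-e) = -lineParams Ω c e := by
    ext r
    simp [lineParams]
  obtain ⟨r, hr, hra⟩ := ha
  have := funkD_add_smul Ω c (-e) (neg_le_neg hab) ⟨-r, by simpa [hneg] using hr, neg_lt_neg hra⟩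
  rw [neg_smul_neg, neg_smul_neg, hneg] at this
  rw [this, infPotential, infPotential]
  ring

def weightedPotential (K : Set ℝ) (t r : ℝ) : ℝ :=
  (1 - t) * supPotential K r + t * infPotential K r

lemma weightedPotential_antitoneOn (K : Set ℝ) {t : ℝ} (ht : t ∈ Icc (0 : ℝ) 1) :
    AntitoneOn (weightedPotential K t) {r | (∃ s ∈ K, s < r) ∧ ∃ s ∈ K, r < s} := by
  intro x ⟨hx₁, hx₂⟩ y ⟨hy₁, hy₂⟩ hxy
  have hsup := supPotential_antitoneOn K hx₂ hy₂ hxy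
  have hinf := infPotential_antitoneOn K hx₁ hy₁ hxy
  unfold weightedPotential
  nlinarith [ht.1, ht.2]

lemma funkWa_add_smul (Ω : Set (EuclideanSpace ℝ (Fin n))) (t : ℝ)
    (c e : EuclideanSpace ℝ (Fin n)) {a b : ℝ} (hab : a ≤ b)
    (ha : ∃ r ∈ lineParams Ω c e, r < a) (hb : ∃ r ∈ lineParams Ω c e, b < r) :
    funkWa Ω t (c + a • e) (c + b • e)
      = weightedPotential (lineParams Ω c e) t a - weightedPotential (lineParams Ω c e) t b := by
  rw [funkWa, funkD_add_smul Ω c e hab hb, funkD_add_smul_swap Ω c e hab ha, weightedPotential,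
    weightedPotential]
  ring

theorem segment_geodesic_for_weighted_funk_general
    (Ω : Set (EuclideanSpace ℝ (Fin n)))
    (t : ℝ) (ht : t ∈ Icc (0 : ℝ) 1)
    (p q : EuclideanSpace ℝ (Fin n)) (hp : p ∈ interior Ω) (hq : q ∈ interior Ω) :
    weakMetricLength (fun x y => ENNReal.ofReal (funkWa Ω t x y))
        (fun s => p + s • (q - p)) 0 1
      = ENNReal.ofReal (funkWa Ω t p q) := by
  set K := lineParams Ω p (q - p)
  obtain ⟨⟨r₀, hr₀, hr₀0⟩, -⟩ :=
    exists_mem_lineParams_lt_gt (show p + (0 : ℝ) • (q - p) ∈ interior Ω by simpa using hp)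
  obtain ⟨-, ⟨r₁, hr₁, hr₁1⟩⟩ :=
    exists_mem_lineParams_lt_gt (show p + (1 : ℝ) • (q - p) ∈ interior Ω by simpa using hq)
  have hlo : ∀ x ∈ Icc (0 : ℝ) 1, ∃ r ∈ K, r < x := fun x hx => ⟨r₀, hr₀, hr₀0.trans_le hx.1⟩
  have hhi : ∀ x ∈ Icc (0 : ℝ) 1, ∃ r ∈ K, x < r := fun x hx => ⟨r₁, hr₁, hx.2.trans_lt hr₁1⟩
  have key := weakMetricLength_eq_of_potential (funkWa Ω t) (fun s => p + s • (q - p))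
    zero_le_one (weightedPotential K t)
    (fun x hx y hy => weightedPotential_antitoneOn K ht ⟨hlo x hx, hhi x hx⟩ ⟨hlo y hy, hhi y hy⟩)
    fun x hx y hy hxy => funkWa_add_smul Ω t p (q - p) hxy (hlo x hx) (hhi y hy)
  simpa only [zero_smul, add_zero, one_smul, add_sub_cancel] using key

/-- Let `Ω ⊆ ℝⁿ` be a closed convex set with nonempty interior and let
`𝔉` be the Funk metric on the interior of `Ω`. For every `t ∈ [0,1]`, Euclidean straight
line segments contained in the interior of `Ω` are geodesics for the arithmetic weighted
Funk metric `𝔉_t^a`: the length of the segment from `p` to `q` with respect to `𝔉_t^a`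
(the supremum over finite partitions of sums of `𝔉_t^a`-distances of consecutive points)
equals `𝔉_t^a(p,q)`. -/
theorem segment_geodesic_for_weighted_funk
    (Ω : Set (EuclideanSpace ℝ (Fin n)))
    (hcl : IsClosed Ω) (hconv : Convex ℝ Ω) (hne : (interior Ω).Nonempty)
    (t : ℝ) (ht : t ∈ Icc (0 : ℝ) 1)
    (p q : EuclideanSpace ℝ (Fin n)) (hp : p ∈ interior Ω) (hq : q ∈ interior Ω) :
    weakMetricLength (fun x y => ENNReal.ofReal (funkWa Ω t x y))
        (fun s => p + s • (q - p)) 0 1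
      = ENNReal.ofReal (funkWa Ω t p q) :=
  segment_geodesic_for_weighted_funk_general Ω t ht p q hp hq
end
end

section
/- Let Ω be an open convex set in ℝⁿ and let p(x,v) = inf{ s > 0 : x + v/s ∈ Ω } be the Lagrangian of the Funk metric 𝔉 on Ω. Then for every t ∈ [0,1], the arithmetic weighted Funk metric 𝔉_t^a(x,y) = (1−t)·𝔉(x,y) + t·𝔉(y,x) is a Finsler metric with Lagrangian p_t^a(x,v) = (1−t)·p(x,v) + t·p(x,−v); that is, 𝔉_t^a coincides with the weak metric induced by the Finsler structure p_t^a. Furthermore, Euclidean straight line segments in Ω are minimal paths (geodesics) of 𝔉_t^a. -/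
open Set
open scoped ENNReal

noncomputable section

open scoped Classical

variable {n : ℕ}

/-- A path `γ : [a,b] → ℝⁿ` is piecewise `C¹`: continuous on `[a,b]` and `C¹` on each
piece of some partition `a = T₀ ≤ … ≤ T_k = b`. -/
def IsPiecewiseC1On (γ : ℝ → EuclideanSpace ℝ (Fin n)) (a b : ℝ) : Prop :=
  a ≤ b ∧ ContinuousOn γ (Icc a b) ∧
  ∃ (k : ℕ) (T : Fin (k + 1) → ℝ), Monotone T ∧ T 0 = a ∧ T (Fin.last k) = b ∧
    ∀ i : Fin k, ContDiffOn ℝ 1 γ (Icc (T i.castSucc) (T i.succ))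

/-- The length of a path `γ : [a,b] → ℝⁿ` with respect to a Lagrangian
`L : Ω × ℝⁿ → ℝ` : `∫ₐᵇ L (γ s) (γ̇ s) ds`. -/
noncomputable def lagrangianLen
    (L : EuclideanSpace ℝ (Fin n) → EuclideanSpace ℝ (Fin n) → ℝ)
    (γ : ℝ → EuclideanSpace ℝ (Fin n)) (a b : ℝ) : ℝ≥0∞ :=
  ∫⁻ s in Icc a b, ENNReal.ofReal (L (γ s) (deriv γ s))

/-- The weak metric induced on `Ω ⊆ ℝⁿ` by a Lagrangian `L` (a Finsler structure on `Ω`):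
the infimum of the `L`-lengths of piecewise `C¹` paths staying in `Ω` that join `x`
to `y`. -/
noncomputable def lagrangianDist (Ω : Set (EuclideanSpace ℝ (Fin n)))
    (L : EuclideanSpace ℝ (Fin n) → EuclideanSpace ℝ (Fin n) → ℝ)
    (x y : EuclideanSpace ℝ (Fin n)) : ℝ≥0∞ :=
  ⨅ (γ : ℝ → EuclideanSpace ℝ (Fin n)) (a : ℝ) (b : ℝ)
    (_ : IsPiecewiseC1On γ a b ∧ MapsTo γ (Icc a b) Ω ∧ γ a = x ∧ γ b = y),
    lagrangianLen L γ a b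

/-- The Lagrangian of the Funk metric of an open convex `Ω ⊆ ℝⁿ`:
`p(x,v) = inf {s > 0 | x + v/s ∈ Ω}`. -/
noncomputable def funkLagrangian (Ω : Set (EuclideanSpace ℝ (Fin n)))
    (x v : EuclideanSpace ℝ (Fin n)) : ℝ :=
  sInf {s : ℝ | 0 < s ∧ x + s⁻¹ • v ∈ Ω}

/-!
For `x, y ∈ Ω`, Hahn–Banach gives a continuous linear functional `f` and a level `C` with
`f < C` on `Ω` and `f = C` where the ray from `x` through `y` leaves `Ω` (`f = 0` if it never
does). Along that ray the Funk distance and the Funk Lagrangian are both read off the log-barrier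
`ψ = -log (C - f ·)`: `𝔉(x,y) = ψ y - ψ x` and `p(z, y - x) = dψ_z (y - x)`, while on all of `Ω`,
`dψ_z w = f w / (C - f z) ≤ p(z, w)`. Doing the same for the reverse ray with `(g, D)` yields a
potential `Φ = (1 - t) ψ_f - t ψ_g` with `𝔉_t^a(x,y) = Φ y - Φ x`, whose differential is dominated
by `p_t^a` on `Ω`, with equality along the segment `[x, y]`. Integrating, every path from `x` to
`y` has `p_t^a`-length at least `Φ y - Φ x`, and the segment attains it. Since `𝔉_t^a` is the
increment of `Φ` between any two ordered points of the segment, the segment is a geodesic.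
-/

section Auxiliary

open MeasureTheory

theorem ofReal_integral_le_lintegral_ofReal {α : Type*} [MeasurableSpace α] {μ : Measure α}
    {u : α → ℝ} (hu : Integrable u μ) :
    ENNReal.ofReal (∫ a, u a ∂μ) ≤ ∫⁻ a, ENNReal.ofReal (u a) ∂μ := by
  rw [integral_eq_lintegral_pos_part_sub_lintegral_neg_part hu]
  exact (ENNReal.ofReal_le_ofReal (sub_le_self _ ENNReal.toReal_nonneg)).trans
    ENNReal.ofReal_toReal_le

theorem Fin.sum_succ_sub_castSucc {M : Type*} [AddCommGroup M] {k : ℕ} (φ : Fin (k + 1) → M) :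
    ∑ i : Fin k, (φ i.succ - φ i.castSucc) = φ (Fin.last k) - φ 0 := by
  induction k with
  | zero => simp
  | succ k ih =>
    rw [Fin.sum_univ_castSucc]
    simp only [Fin.succ_castSucc]
    rw [ih (fun i => φ i.castSucc), Fin.succ_last, Fin.castSucc_zero]
    abel

theorem pairwise_disjoint_Ioo_of_monotone {α : Type*} [LinearOrder α] {k : ℕ}
    {T : Fin (k + 1) → α} (hT : Monotone T) :
    Pairwise (Function.onFun Disjoint fun i : Fin k => Ioo (T i.castSucc) (T i.succ)) := by
  have key : ∀ i j : Fin k, i < j →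
      Disjoint (Ioo (T i.castSucc) (T i.succ)) (Ioo (T j.castSucc) (T j.succ)) :=
    fun i j hij => (Ioc_disjoint_Ioc_of_le (hT (Fin.succ_le_castSucc_iff.2 hij))).mono
      Ioo_subset_Ioc_self Ioo_subset_Ioc_self
  intro i j hij
  rcases hij.lt_or_gt with h | h
  · exact key i j h
  · exact (key j i h).symm

end Auxiliary

section RaySupport

variable {E : Type*} [NormedAddCommGroup E] [NormedSpace ℝ E]

structure IsRaySupport (Ω : Set E) (x v : E) (f : E →L[ℝ] ℝ) (C : ℝ) : Prop where
  lt_of_mem : ∀ z ∈ Ω, f z < C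
  nonneg : 0 ≤ f v
  mem_iff : ∀ s : ℝ, 0 ≤ s → (x + s • v ∈ Ω ↔ f (x + s • v) < C)
  mem_closure_iff : ∀ s : ℝ, 0 ≤ s → (x + s • v ∈ closure Ω ↔ f (x + s • v) ≤ C)

variable {Ω : Set E} {x v : E} {f : E →L[ℝ] ℝ} {C : ℝ}

theorem exists_isRaySupport (hop : IsOpen Ω) (hconv : Convex ℝ Ω) (hx : x ∈ Ω) (v : E) :
    ∃ f C, IsRaySupport Ω x v f C := by
  by_cases hray : ∀ s : ℝ, 0 ≤ s → x + s • v ∈ Ω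
  · refine ⟨0, 1, fun _ _ => one_pos, le_rfl, fun s hs => ?_, fun s hs => ?_⟩
    · simp [hray s hs]
    · simp [subset_closure (hray s hs)]
  push Not at hray
  -- `m` is the time at which the ray leaves `Ω`; Hahn–Banach separates `x + m • v` from `Ω`
  set S := {s : ℝ | 0 ≤ s ∧ x + s • v ∉ Ω}
  have hS : IsClosed S := isClosed_Ici.inter (hop.isClosed_compl.preimage (by fun_prop))
  set m := sInf S
  have hmS : m ∈ S := hS.csInf_mem hray ⟨0, fun s hs => hs.1⟩
  have hlt : ∀ s, 0 ≤ s → s < m → x + s • v ∈ Ω := fun s hs hsm =>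
    by_contra fun h => notMem_of_lt_csInf hsm ⟨0, fun s hs => hs.1⟩ ⟨hs, h⟩
  have hm0 : 0 < m := hmS.1.lt_of_ne fun h => hmS.2 (by simpa [← h] using hx)
  obtain ⟨f, hf⟩ := geometric_hahn_banach_open_point hconv hop hmS.2
  have hf_ray : ∀ s, f (x + s • v) = f x + s * f v := fun s => by simp
  have hfv : 0 < f v := by
    have := hf x hx
    rw [hf_ray] at this
    exact pos_of_mul_pos_right (by linarith) hm0.le
  refine ⟨f, f (x + m • v), hf, hfv.le, fun s hs => ⟨fun h => hf _ h, fun h => hlt s hs ?_⟩,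
    fun s hs => ⟨fun h => ?_, fun h => ?_⟩⟩
  · rw [hf_ray, hf_ray] at h
    exact lt_of_mul_lt_mul_right (by linarith) hfv.le
  · exact closure_minimal (fun z hz => (hf z hz).le) (isClosed_le f.continuous continuous_const) h
  · have hsm : s ∈ closure (Ico 0 m) := by
      rw [closure_Ico hm0.ne]
      rw [hf_ray, hf_ray] at h
      exact ⟨hs, le_of_mul_le_mul_right (by linarith) hfv⟩
    exact map_mem_closure (f := fun s : ℝ => x + s • v) (by fun_prop) hsm
      fun r hr => hlt r hr.1 hr.2

theorem IsRaySupport.shift (h : IsRaySupport Ω x v f C) {σ c : ℝ} (hσ : 0 ≤ σ) (hc : 0 ≤ c) :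
    IsRaySupport Ω (x + σ • v) (c • v) f C := by
  have hray : ∀ s : ℝ, x + σ • v + s • c • v = x + (σ + s * c) • v := fun s => by module
  refine ⟨h.lt_of_mem, ?_, fun s hs => ?_, fun s hs => ?_⟩
  · rw [map_smul, smul_eq_mul]
    exact mul_nonneg hc h.nonneg
  · rw [hray]
    exact h.mem_iff _ (by positivity)
  · rw [hray]
    exact h.mem_closure_iff _ (by positivity)

end RaySupport

section LogBarrier

variable {E : Type*} [NormedAddCommGroup E] [NormedSpace ℝ E]

def logBarrier (f : E →L[ℝ] ℝ) (C : ℝ) (z : E) : ℝ :=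
  -Real.log (C - f z)

theorem hasFDerivAt_logBarrier {f : E →L[ℝ] ℝ} {C : ℝ} {z : E} (hz : f z < C) :
    HasFDerivAt (logBarrier f C) ((C - f z)⁻¹ • f) z := by
  have := ((f.hasFDerivAt.const_sub C).log (sub_pos.2 hz).ne').neg
  simp only [smul_neg, neg_neg] at this
  exact this

end LogBarrier

section FunkFormulas

variable {Ω : Set (EuclideanSpace ℝ (Fin n))} {x y z v : EuclideanSpace ℝ (Fin n)}
  {f : EuclideanSpace ℝ (Fin n) →L[ℝ] ℝ} {C : ℝ}

theorem funkLagrangian_nonneg : 0 ≤ funkLagrangian Ω z v :=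
  Real.sInf_nonneg fun _ hs => hs.1.le

theorem div_le_funkLagrangian (hop : IsOpen Ω) (hf : ∀ z ∈ Ω, f z < C) (hz : z ∈ Ω)
    (v : EuclideanSpace ℝ (Fin n)) : f v / (C - f z) ≤ funkLagrangian Ω z v := by
  have hne : {s : ℝ | 0 < s ∧ z + s⁻¹ • v ∈ Ω}.Nonempty := by
    have hlim : Filter.Tendsto (fun s : ℝ => z + s⁻¹ • v) Filter.atTop (nhds z) := by
      simpa using ((tendsto_inv_atTop_zero (𝕜 := ℝ)).smul_const v).const_add z
    exact ((Filter.eventually_gt_atTop 0).and (hlim.eventually (hop.mem_nhds hz))).exists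
  refine le_csInf hne fun s ⟨hs, hmem⟩ => ?_
  have hlt := hf _ hmem
  rw [map_add, map_smul, smul_eq_mul] at hlt
  rw [div_le_iff₀ (sub_pos.2 (hf z hz))]
  exact ((inv_mul_lt_iff₀ hs).1 (by linarith)).le

theorem IsRaySupport.funkLagrangian_eq (h : IsRaySupport Ω z v f C) (hz : z ∈ Ω) :
    funkLagrangian Ω z v = f v / (C - f z) := by
  have hC : 0 < C - f z := sub_pos.2 (h.lt_of_mem z hz)
  have hset : {s : ℝ | 0 < s ∧ z + s⁻¹ • v ∈ Ω} = Ioi (f v / (C - f z)) := by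
    ext s
    simp only [mem_ofPred_eq, mem_Ioi, div_lt_iff₀ hC]
    constructor
    · rintro ⟨hs, hmem⟩
      have hlt := (h.mem_iff _ (inv_nonneg.2 hs.le)).1 hmem
      rw [map_add, map_smul, smul_eq_mul] at hlt
      exact (inv_mul_lt_iff₀ hs).1 (by linarith)
    · intro hs
      have hs0 : 0 < s := pos_of_mul_pos_left (h.nonneg.trans_lt hs) hC.le
      refine ⟨hs0, (h.mem_iff _ (inv_nonneg.2 hs0.le)).2 ?_⟩
      rw [map_add, map_smul, smul_eq_mul]
      linarith [(inv_mul_lt_iff₀ hs0).2 hs]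
  rw [funkLagrangian, hset, csInf_Ioi]

theorem IsRaySupport.funkD_closure_eq (h : IsRaySupport Ω x (y - x) f C) (hy : y ∈ Ω) :
    funkD (closure Ω) x y = logBarrier f C y - logBarrier f C x := by
  have hfy : f y = f x + f (y - x) := by rw [← map_add, add_sub_cancel]
  have hCy := h.lt_of_mem y hy
  have hray : {s : ℝ | 0 ≤ s ∧ x + s • (y - x) ∈ closure Ω} =
      {s : ℝ | 0 ≤ s ∧ s * f (y - x) ≤ C - f x} := by
    ext s
    refine and_congr_right fun hs => (h.mem_closure_iff s hs).trans ?_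
    rw [map_add, map_smul, smul_eq_mul]
    constructor <;> intro <;> linarith
  rw [funkD, hray, logBarrier, logBarrier]
  rcases h.nonneg.eq_or_lt with hv | hv
  · have hunbdd : ¬ BddAbove {s : ℝ | 0 ≤ s ∧ s * f (y - x) ≤ C - f x} := by
      rintro ⟨M, hM⟩
      have hmem : max M 0 + 1 ∈ {s : ℝ | 0 ≤ s ∧ s * f (y - x) ≤ C - f x} :=
        ⟨by positivity, by rw [← hv, mul_zero]; linarith⟩
      linarith [hM hmem, le_max_left M 0]
    rw [if_neg hunbdd, hfy, ← hv, add_zero, sub_self]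
  -- the ray leaves `closure Ω` at `x + m • (y - x)`
  set m := (C - f x) / f (y - x)
  have hm1 : 1 < m := (one_lt_div hv).2 (by linarith)
  have hIcc : {s : ℝ | 0 ≤ s ∧ s * f (y - x) ≤ C - f x} = Icc 0 m := by
    ext s
    exact and_congr_right fun _ => (le_div_iff₀ hv).symm
  have hyx : y - x ≠ 0 := fun h0 => hv.ne' (by rw [h0, map_zero])
  have hdx : dist x (x + m • (y - x)) = m * ‖y - x‖ := by
    rw [dist_self_add_right, norm_smul, Real.norm_of_nonneg (by linarith)]
  have hdy : dist y (x + m • (y - x)) = (m - 1) * ‖y - x‖ := by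
    rw [show x + m • (y - x) = y + (m - 1) • (y - x) by module, dist_self_add_right, norm_smul,
      Real.norm_of_nonneg (by linarith)]
  have hratio : m / (m - 1) = (C - f x) / (C - f y) := by
    rw [hfy, div_sub_one (by linarith), div_div_div_cancel_right₀ hv.ne']
    ring_nf
  rw [hIcc, if_pos bddAbove_Icc, csSup_Icc (by linarith), hdx, hdy,
    mul_div_mul_right _ _ (norm_ne_zero_iff.2 hyx), hratio,
    Real.log_div (by linarith) (by linarith)]
  ring

theorem funkD_closure_nonneg (hop : IsOpen Ω) (hconv : Convex ℝ Ω) (hx : x ∈ Ω) (hy : y ∈ Ω) :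
    0 ≤ funkD (closure Ω) x y := by
  obtain ⟨f, C, hf⟩ := exists_isRaySupport hop hconv hx (y - x)
  have hfy : f x ≤ f y := by
    have := hf.nonneg
    rw [map_sub] at this
    linarith
  rw [hf.funkD_closure_eq hy, logBarrier, logBarrier, sub_nonneg, neg_le_neg_iff]
  exact Real.log_le_log (sub_pos.2 (hf.lt_of_mem y hy)) (by linarith)

end FunkFormulas

section Calibration

open MeasureTheory

variable {E : Type*} [NormedAddCommGroup E] [NormedSpace ℝ E]

structure IsCalibration (Ω : Set E) (L : E → E → ℝ) (Φ : E → ℝ) (Φ' : E → E →L[ℝ] ℝ) :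
    Prop where
  hasFDerivAt : ∀ z ∈ Ω, HasFDerivAt Φ (Φ' z) z
  continuousOn : ContinuousOn Φ' Ω
  le : ∀ z ∈ Ω, ∀ w, Φ' z w ≤ L z w

variable {Ω : Set E} {L : E → E → ℝ} {Φ : E → ℝ} {Φ' : E → E →L[ℝ] ℝ}

theorem IsCalibration.ofReal_sub_le_setLIntegral (hΦ : IsCalibration Ω L Φ Φ') {γ : ℝ → E}
    {c d : ℝ} (hcd : c ≤ d) (hγ : ContDiffOn ℝ 1 γ (Icc c d)) (hmap : MapsTo γ (Icc c d) Ω) :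
    ENNReal.ofReal (Φ (γ d) - Φ (γ c)) ≤
      ∫⁻ s in Ioo c d, ENNReal.ofReal (L (γ s) (deriv γ s)) := by
  rcases hcd.eq_or_lt with rfl | hcd
  · simp
  set γ' := derivWithin γ (Icc c d)
  have hΦc : ContinuousOn Φ Ω := fun z hz =>
    (hΦ.hasFDerivAt z hz).continuousAt.continuousWithinAt
  have hΦγ : ContinuousOn (fun s => Φ (γ s)) (Icc c d) := hΦc.comp hγ.continuousOn hmap
  have hu : ContinuousOn (fun s => Φ' (γ s) (γ' s)) (Icc c d) :=
    (hΦ.continuousOn.comp hγ.continuousOn hmap).clm_apply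
      (hγ.continuousOn_derivWithin (uniqueDiffOn_Icc hcd) le_rfl)
  have hderiv : ∀ s ∈ Ioo c d, HasDerivAt (fun s => Φ (γ s)) (Φ' (γ s) (γ' s)) s := by
    intro s hs
    have hγs : HasDerivAt γ (γ' s) s :=
      ((hγ.differentiableOn one_ne_zero s (Ioo_subset_Icc_self hs)).hasDerivWithinAt).hasDerivAt
        (Icc_mem_nhds hs.1 hs.2)
    exact (hΦ.hasFDerivAt _ (hmap (Ioo_subset_Icc_self hs))).comp_hasDerivAt s hγs
  have hftc : ∫ s in Ioo c d, Φ' (γ s) (γ' s) = Φ (γ d) - Φ (γ c) := by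
    rw [← integral_Ioc_eq_integral_Ioo, ← intervalIntegral.integral_of_le hcd.le]
    exact intervalIntegral.integral_eq_sub_of_hasDeriv_right_of_le hcd.le hΦγ
      (fun s hs => (hderiv s hs).hasDerivWithinAt) (hu.intervalIntegrable_of_Icc hcd.le)
  rw [← hftc]
  refine (ofReal_integral_le_lintegral_ofReal
    ((hu.integrableOn_Icc).mono_set Ioo_subset_Icc_self)).trans
    (setLIntegral_mono' measurableSet_Ioo fun s hs => ENNReal.ofReal_le_ofReal ?_)
  rw [show γ' s = deriv γ s from derivWithin_of_mem_nhds (Icc_mem_nhds hs.1 hs.2)]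
  exact hΦ.le _ (hmap (Ioo_subset_Icc_self hs)) _

end Calibration

section LagrangianDist

open MeasureTheory

variable {Ω : Set (EuclideanSpace ℝ (Fin n))}
  {L : EuclideanSpace ℝ (Fin n) → EuclideanSpace ℝ (Fin n) → ℝ}
  {Φ : EuclideanSpace ℝ (Fin n) → ℝ}
  {Φ' : EuclideanSpace ℝ (Fin n) → EuclideanSpace ℝ (Fin n) →L[ℝ] ℝ}
  {x y : EuclideanSpace ℝ (Fin n)}

theorem IsCalibration.ofReal_sub_le_lagrangianLen (hΦ : IsCalibration Ω L Φ Φ')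
    {γ : ℝ → EuclideanSpace ℝ (Fin n)} {a b : ℝ} (hγ : IsPiecewiseC1On γ a b)
    (hmap : MapsTo γ (Icc a b) Ω) :
    ENNReal.ofReal (Φ (γ b) - Φ (γ a)) ≤ lagrangianLen L γ a b := by
  obtain ⟨-, -, k, T, hT, hT0, hTk, hC1⟩ := hγ
  have hpiece : ∀ i : Fin k, Icc (T i.castSucc) (T i.succ) ⊆ Icc a b := fun i =>
    Icc_subset_Icc (hT0 ▸ hT (Fin.zero_le _)) (hTk ▸ hT (Fin.le_last _))
  calc ENNReal.ofReal (Φ (γ b) - Φ (γ a))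
      = ENNReal.ofReal (∑ i : Fin k, (Φ (γ (T i.succ)) - Φ (γ (T i.castSucc)))) := by
        rw [Fin.sum_succ_sub_castSucc (fun j => Φ (γ (T j))), hT0, hTk]
    _ ≤ ∑ i : Fin k, ENNReal.ofReal (Φ (γ (T i.succ)) - Φ (γ (T i.castSucc))) :=
        Finset.le_sum_of_subadditive _ ENNReal.ofReal_zero.le (fun _ _ => ENNReal.ofReal_add_le) _ _
    _ ≤ ∑ i : Fin k, ∫⁻ s in Ioo (T i.castSucc) (T i.succ),
          ENNReal.ofReal (L (γ s) (deriv γ s)) :=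
        Finset.sum_le_sum fun i _ => hΦ.ofReal_sub_le_setLIntegral (hT (Fin.castSucc_le_succ i))
          (hC1 i) (hmap.mono_left (hpiece i))
    _ = ∫⁻ s in ⋃ i : Fin k, Ioo (T i.castSucc) (T i.succ),
          ENNReal.ofReal (L (γ s) (deriv γ s)) := by
        rw [lintegral_iUnion (fun _ => measurableSet_Ioo) (pairwise_disjoint_Ioo_of_monotone hT),
          tsum_fintype]
    _ ≤ lagrangianLen L γ a b :=
        lintegral_mono_set (iUnion_subset fun i => Ioo_subset_Icc_self.trans (hpiece i))

theorem IsCalibration.ofReal_sub_le_lagrangianDist (hΦ : IsCalibration Ω L Φ Φ') :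
    ENNReal.ofReal (Φ y - Φ x) ≤ lagrangianDist Ω L x y :=
  le_iInf fun _ => le_iInf fun _ => le_iInf fun _ => le_iInf fun ⟨hγ, hmap, hx, hy⟩ =>
    hx ▸ hy ▸ hΦ.ofReal_sub_le_lagrangianLen hγ hmap

theorem lagrangianDist_le_lagrangianLen_segment (hconv : Convex ℝ Ω) (hx : x ∈ Ω) (hy : y ∈ Ω)
    (L : EuclideanSpace ℝ (Fin n) → EuclideanSpace ℝ (Fin n) → ℝ) :
    lagrangianDist Ω L x y ≤ lagrangianLen L (fun r => x + r • (y - x)) 0 1 := by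
  have hsmooth : ContDiff ℝ 1 fun r : ℝ => x + r • (y - x) := by fun_prop
  have hpc : IsPiecewiseC1On (fun r : ℝ => x + r • (y - x)) 0 1 :=
    ⟨zero_le_one, hsmooth.continuous.continuousOn, 1, ![0, 1],
      Fin.monotone_iff_le_succ.2 (by simp), rfl, rfl, fun _ => hsmooth.contDiffOn⟩
  exact iInf_le_of_le _ <| iInf_le_of_le 0 <| iInf_le_of_le 1 <| iInf_le_of_le
    ⟨hpc, fun r hr => hconv.add_smul_sub_mem hx hy hr, by simp, by simp⟩ le_rfl

theorem IsCalibration.lagrangianLen_segment (hΦ : IsCalibration Ω L Φ Φ') (hconv : Convex ℝ Ω)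
    (hx : x ∈ Ω) (hy : y ∈ Ω)
    (hL : ∀ r ∈ Icc (0 : ℝ) 1, L (x + r • (y - x)) (y - x) = Φ' (x + r • (y - x)) (y - x))
    (hL0 : ∀ r ∈ Icc (0 : ℝ) 1, 0 ≤ L (x + r • (y - x)) (y - x)) :
    lagrangianLen L (fun r => x + r • (y - x)) 0 1 = ENNReal.ofReal (Φ y - Φ x) := by
  set γ := fun r : ℝ => x + r • (y - x)
  have hγ : ∀ r, HasDerivAt γ (y - x) r := fun r => by
    simpa only [one_smul] using ((hasDerivAt_id' r).smul_const (y - x)).const_add x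
  have hmap : MapsTo γ (Icc 0 1) Ω := fun r hr => hconv.add_smul_sub_mem hx hy hr
  have hu : ContinuousOn (fun r => Φ' (γ r) (y - x)) (Icc 0 1) :=
    (hΦ.continuousOn.comp (by fun_prop : Continuous γ).continuousOn hmap).clm_apply
      continuousOn_const
  have hftc : ∫ r in (0 : ℝ)..1, Φ' (γ r) (y - x) = Φ y - Φ x := by
    have := intervalIntegral.integral_eq_sub_of_hasDerivAt (f := fun r => Φ (γ r))
      (fun r hr => (hΦ.hasFDerivAt _ (hmap (by rwa [uIcc_of_le zero_le_one] at hr))).comp_hasDerivAt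
        r (hγ r)) (hu.intervalIntegrable_of_Icc zero_le_one)
    simpa [γ] using this
  rw [lagrangianLen, setLIntegral_congr_fun measurableSet_Icc
      (fun r hr => by rw [(hγ r).deriv, hL r hr]),
    ← ofReal_integral_eq_lintegral_ofReal hu.integrableOn_Icc
      ((ae_restrict_mem measurableSet_Icc).mono fun r hr =>
        show 0 ≤ Φ' (γ r) (y - x) from hL r hr ▸ hL0 r hr),
    integral_Icc_eq_integral_Ioc, ← intervalIntegral.integral_of_le zero_le_one, hftc]

end LagrangianDist

section WeakMetricLength

variable {X : Type*} {η : X → X → ℝ≥0∞} {α : ℝ → X} {a b : ℝ}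

theorem le_weakMetricLength (hab : a ≤ b) : η (α a) (α b) ≤ weakMetricLength η α a b :=
  le_iSup₂_of_le 0 ![a, b] <| le_iSup_of_le
    ⟨Fin.monotone_iff_le_succ.2 (by simpa using hab), rfl, rfl⟩ (by simp)

theorem weakMetricLength_eq_of_eq_ofReal_sub {φ : ℝ → ℝ} (hab : a ≤ b)
    (hφ : MonotoneOn φ (Icc a b))
    (h : ∀ σ ∈ Icc a b, ∀ τ ∈ Icc a b, σ ≤ τ → η (α σ) (α τ) = ENNReal.ofReal (φ τ - φ σ)) :
    weakMetricLength η α a b = ENNReal.ofReal (φ b - φ a) := by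
  refine le_antisymm (iSup₂_le fun k T => iSup_le fun ⟨hT, hT0, hTk⟩ => ?_)
    ((h a ⟨le_rfl, hab⟩ b ⟨hab, le_rfl⟩ hab).symm.trans_le (le_weakMetricLength hab))
  have hTab : ∀ i, T i ∈ Icc a b := fun i =>
    ⟨hT0 ▸ hT (Fin.zero_le i), hTk ▸ hT (Fin.le_last i)⟩
  have hle : ∀ i : Fin (k + 1), T i.castSucc ≤ T i.succ := fun i => hT (Fin.castSucc_le_succ i)
  refine le_of_eq ?_
  calc ∑ i, η (α (T i.castSucc)) (α (T i.succ))
      = ∑ i : Fin (k + 1), ENNReal.ofReal (φ (T i.succ) - φ (T i.castSucc)) :=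
        Finset.sum_congr rfl fun i _ => h _ (hTab _) _ (hTab _) (hle i)
    _ = ENNReal.ofReal (∑ i : Fin (k + 1), (φ (T i.succ) - φ (T i.castSucc))) :=
        (ENNReal.ofReal_sum_of_nonneg fun i _ =>
          sub_nonneg.2 (hφ (hTab _) (hTab _) (hle i))).symm
    _ = ENNReal.ofReal (φ b - φ a) := by
        rw [Fin.sum_succ_sub_castSucc (fun j => φ (T j)), hT0, hTk]

end WeakMetricLength

section WeightedFunk

variable {Ω : Set (EuclideanSpace ℝ (Fin n))} {x y : EuclideanSpace ℝ (Fin n)}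
  {f g : EuclideanSpace ℝ (Fin n) →L[ℝ] ℝ} {C D t : ℝ}

def weightedFunkLagrangian (Ω : Set (EuclideanSpace ℝ (Fin n))) (t : ℝ)
    (z v : EuclideanSpace ℝ (Fin n)) : ℝ :=
  (1 - t) * funkLagrangian Ω z v + t * funkLagrangian Ω z (-v)

def weightedLogBarrier (t : ℝ) (f : EuclideanSpace ℝ (Fin n) →L[ℝ] ℝ) (C : ℝ)
    (g : EuclideanSpace ℝ (Fin n) →L[ℝ] ℝ) (D : ℝ) (z : EuclideanSpace ℝ (Fin n)) : ℝ :=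
  (1 - t) * logBarrier f C z - t * logBarrier g D z

theorem funkWa_closure_nonneg (hop : IsOpen Ω) (hconv : Convex ℝ Ω) (ht : t ∈ Icc (0 : ℝ) 1)
    (hx : x ∈ Ω) (hy : y ∈ Ω) : 0 ≤ funkWa (closure Ω) t x y :=
  add_nonneg (mul_nonneg (sub_nonneg.2 ht.2) (funkD_closure_nonneg hop hconv hx hy))
    (mul_nonneg ht.1 (funkD_closure_nonneg hop hconv hy hx))

theorem weightedFunkLagrangian_nonneg (ht : t ∈ Icc (0 : ℝ) 1) {z v : EuclideanSpace ℝ (Fin n)} :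
    0 ≤ weightedFunkLagrangian Ω t z v :=
  add_nonneg (mul_nonneg (sub_nonneg.2 ht.2) funkLagrangian_nonneg)
    (mul_nonneg ht.1 funkLagrangian_nonneg)

theorem isCalibration_weightedLogBarrier (hop : IsOpen Ω) (ht : t ∈ Icc (0 : ℝ) 1)
    (hf : ∀ z ∈ Ω, f z < C) (hg : ∀ z ∈ Ω, g z < D) :
    IsCalibration Ω (weightedFunkLagrangian Ω t) (weightedLogBarrier t f C g D)
      (fun z => (1 - t) • (C - f z)⁻¹ • f - t • (D - g z)⁻¹ • g) := by
  refine ⟨fun z hz => ?_, ?_, fun z hz w => ?_⟩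
  · exact ((hasFDerivAt_logBarrier (hf z hz)).const_mul (1 - t)).sub
      ((hasFDerivAt_logBarrier (hg z hz)).const_mul t)
  · have hC : ContinuousOn (fun z => (C - f z)⁻¹) Ω :=
      (continuousOn_const.sub f.continuous.continuousOn).inv₀ fun z hz => (sub_pos.2 (hf z hz)).ne'
    have hD : ContinuousOn (fun z => (D - g z)⁻¹) Ω :=
      (continuousOn_const.sub g.continuous.continuousOn).inv₀ fun z hz => (sub_pos.2 (hg z hz)).ne'
    fun_prop
  · have hpf := mul_le_mul_of_nonneg_left (div_le_funkLagrangian hop hf hz w) (sub_nonneg.2 ht.2)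
    have hpg := mul_le_mul_of_nonneg_left (div_le_funkLagrangian hop hg hz (-w)) ht.1
    rw [map_neg, neg_div, mul_neg] at hpg
    simp only [sub_apply, smul_apply, smul_eq_mul, weightedFunkLagrangian, ← div_eq_inv_mul]
    linarith

theorem weightedFunkLagrangian_segment (hconv : Convex ℝ Ω) (hx : x ∈ Ω) (hy : y ∈ Ω)
    (hf : IsRaySupport Ω x (y - x) f C) (hg : IsRaySupport Ω y (x - y) g D) {r : ℝ}
    (hr : r ∈ Icc (0 : ℝ) 1) :
    weightedFunkLagrangian Ω t (x + r • (y - x)) (y - x) =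
      ((1 - t) • (C - f (x + r • (y - x)))⁻¹ • f - t • (D - g (x + r • (y - x)))⁻¹ • g)
        (y - x) := by
  have hz : x + r • (y - x) ∈ Ω := hconv.add_smul_sub_mem hx hy hr
  have hzy : x + r • (y - x) = y + (1 - r) • (x - y) := by module
  have hpf := (hf.shift hr.1 zero_le_one).funkLagrangian_eq hz
  have hpg := (hg.shift (sub_nonneg.2 hr.2) zero_le_one).funkLagrangian_eq (hzy ▸ hz)
  rw [one_smul] at hpf hpg
  rw [← hzy] at hpg
  rw [weightedFunkLagrangian, neg_sub, hpf, hpg]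
  simp only [sub_apply, smul_apply, smul_eq_mul, map_sub]
  ring

theorem funkWa_closure_segment (hconv : Convex ℝ Ω) (hx : x ∈ Ω) (hy : y ∈ Ω)
    (hf : IsRaySupport Ω x (y - x) f C) (hg : IsRaySupport Ω y (x - y) g D) {σ τ : ℝ}
    (hσ : 0 ≤ σ) (hστ : σ ≤ τ) (hτ : τ ≤ 1) :
    funkWa (closure Ω) t (x + σ • (y - x)) (x + τ • (y - x)) =
      weightedLogBarrier t f C g D (x + τ • (y - x)) -
        weightedLogBarrier t f C g D (x + σ • (y - x)) := by
  have hmem : ∀ r ∈ Icc (0 : ℝ) 1, x + r • (y - x) ∈ Ω := fun r hr =>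
    hconv.add_smul_sub_mem hx hy hr
  have hzy : ∀ r : ℝ, x + r • (y - x) = y + (1 - r) • (x - y) := fun r => by module
  have hfwd : funkD (closure Ω) (x + σ • (y - x)) (x + τ • (y - x)) =
      logBarrier f C (x + τ • (y - x)) - logBarrier f C (x + σ • (y - x)) := by
    refine IsRaySupport.funkD_closure_eq ?_ (hmem τ ⟨hσ.trans hστ, hτ⟩)
    rw [show x + τ • (y - x) - (x + σ • (y - x)) = (τ - σ) • (y - x) by module]
    exact hf.shift hσ (sub_nonneg.2 hστ)
  have hbwd : funkD (closure Ω) (x + τ • (y - x)) (x + σ • (y - x)) =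
      logBarrier g D (x + σ • (y - x)) - logBarrier g D (x + τ • (y - x)) := by
    rw [hzy σ, hzy τ]
    refine IsRaySupport.funkD_closure_eq ?_ (hzy σ ▸ hmem σ ⟨hσ, hστ.trans hτ⟩)
    rw [show y + (1 - σ) • (x - y) - (y + (1 - τ) • (x - y)) = (τ - σ) • (x - y) by module]
    exact hg.shift (sub_nonneg.2 hτ) (sub_nonneg.2 hστ)
  rw [funkWa, hfwd, hbwd, weightedLogBarrier, weightedLogBarrier]
  ring

theorem lagrangianDist_weightedFunkLagrangian (hop : IsOpen Ω) (hconv : Convex ℝ Ω)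
    (ht : t ∈ Icc (0 : ℝ) 1) (hx : x ∈ Ω) (hy : y ∈ Ω) :
    lagrangianDist Ω (weightedFunkLagrangian Ω t) x y =
      ENNReal.ofReal (funkWa (closure Ω) t x y) := by
  obtain ⟨f, C, hf⟩ := exists_isRaySupport hop hconv hx (y - x)
  obtain ⟨g, D, hg⟩ := exists_isRaySupport hop hconv hy (x - y)
  have hΦ := isCalibration_weightedLogBarrier hop ht hf.lt_of_mem hg.lt_of_mem
  have hxy := funkWa_closure_segment (t := t) hconv hx hy hf hg le_rfl zero_le_one le_rfl
  simp only [zero_smul, one_smul, add_zero, add_sub_cancel] at hxy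
  rw [hxy]
  refine le_antisymm ((lagrangianDist_le_lagrangianLen_segment hconv hx hy _).trans_eq ?_)
    hΦ.ofReal_sub_le_lagrangianDist
  exact hΦ.lagrangianLen_segment hconv hx hy
    (fun r hr => weightedFunkLagrangian_segment hconv hx hy hf hg hr)
    fun _ _ => weightedFunkLagrangian_nonneg ht

theorem weakMetricLength_funkWa_segment (hop : IsOpen Ω) (hconv : Convex ℝ Ω)
    (ht : t ∈ Icc (0 : ℝ) 1) (hx : x ∈ Ω) (hy : y ∈ Ω) :
    weakMetricLength (fun u v => ENNReal.ofReal (funkWa (closure Ω) t u v))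
        (fun s => x + s • (y - x)) 0 1 = ENNReal.ofReal (funkWa (closure Ω) t x y) := by
  obtain ⟨f, C, hf⟩ := exists_isRaySupport hop hconv hx (y - x)
  obtain ⟨g, D, hg⟩ := exists_isRaySupport hop hconv hy (x - y)
  have hseg : ∀ σ ∈ Icc (0 : ℝ) 1, ∀ τ ∈ Icc (0 : ℝ) 1, σ ≤ τ →
      funkWa (closure Ω) t (x + σ • (y - x)) (x + τ • (y - x)) =
        weightedLogBarrier t f C g D (x + τ • (y - x)) -
          weightedLogBarrier t f C g D (x + σ • (y - x)) := fun σ hσ τ hτ hστ =>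
    funkWa_closure_segment hconv hx hy hf hg hσ.1 hστ hτ.2
  have hmono : MonotoneOn (fun r : ℝ => weightedLogBarrier t f C g D (x + r • (y - x)))
      (Icc 0 1) := fun σ hσ τ hτ hστ => by
    rw [← sub_nonneg, ← hseg σ hσ τ hτ hστ]
    exact funkWa_closure_nonneg hop hconv ht (hconv.add_smul_sub_mem hx hy hσ)
      (hconv.add_smul_sub_mem hx hy hτ)
  rw [weakMetricLength_eq_of_eq_ofReal_sub zero_le_one hmono
    fun σ hσ τ hτ hστ => by rw [hseg σ hσ τ hτ hστ],
    ← hseg 0 ⟨le_rfl, zero_le_one⟩ 1 ⟨zero_le_one, le_rfl⟩ zero_le_one]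
  simp

end WeightedFunk

theorem weighted_funk_is_finsler_with_lagrangian_general
    (Ω : Set (EuclideanSpace ℝ (Fin n)))
    (hop : IsOpen Ω) (hconv : Convex ℝ Ω)
    (t : ℝ) (ht : t ∈ Icc (0 : ℝ) 1) :
    (∀ x ∈ Ω, ∀ y ∈ Ω,
      lagrangianDist Ω
          (fun z v => (1 - t) * funkLagrangian Ω z v + t * funkLagrangian Ω z (-v)) x y
        = ENNReal.ofReal (funkWa (closure Ω) t x y)) ∧
    (∀ x ∈ Ω, ∀ y ∈ Ω,
      weakMetricLength (fun u v => ENNReal.ofReal (funkWa (closure Ω) t u v))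
          (fun s => x + s • (y - x)) 0 1
        = ENNReal.ofReal (funkWa (closure Ω) t x y)) := by
  exact ⟨fun x hx y hy => lagrangianDist_weightedFunkLagrangian hop hconv ht hx hy,
    fun x hx y hy => weakMetricLength_funkWa_segment hop hconv ht hx hy⟩

/-- Let `Ω ⊆ ℝⁿ` be a nonempty open convex set, `p` the Lagrangian of
the Funk metric `𝔉` of `Ω`, and `t ∈ [0,1]`. Then the arithmetic weighted Funk metric
`𝔉_t^a(x,y) = (1−t)𝔉(x,y) + t𝔉(y,x)` is a Finsler metric with Lagrangian
`p_t^a(x,v) = (1−t)p(x,v) + t·p(x,−v)`, i.e. it coincides with the weak metric induced by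
the Finsler structure `p_t^a` on `Ω`; moreover, Euclidean straight segments in `Ω` are
geodesics for `𝔉_t^a`. -/
theorem weighted_funk_is_finsler_with_lagrangian
    (Ω : Set (EuclideanSpace ℝ (Fin n)))
    (hop : IsOpen Ω) (hconv : Convex ℝ Ω) (hne : Ω.Nonempty)
    (t : ℝ) (ht : t ∈ Icc (0 : ℝ) 1) :
    (∀ x ∈ Ω, ∀ y ∈ Ω,
      lagrangianDist Ω
          (fun z v => (1 - t) * funkLagrangian Ω z v + t * funkLagrangian Ω z (-v)) x y
        = ENNReal.ofReal (funkWa (closure Ω) t x y)) ∧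
    (∀ x ∈ Ω, ∀ y ∈ Ω,
      weakMetricLength (fun u v => ENNReal.ofReal (funkWa (closure Ω) t u v))
          (fun s => x + s • (y - x)) 0 1
        = ENNReal.ofReal (funkWa (closure Ω) t x y)) :=
  weighted_funk_is_finsler_with_lagrangian_general Ω hop hconv t ht
end
end
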